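/- Fix κ > 0, m ∈ (−1,1), c ∈ (0,1). Suppose θ ∈ (0,1) satisfies (∂/∂θ) Ξ(m,θ;c) = −κc, and set p_+ = 2θc/(1+m) and p_− = 2(1−θ)c/(1−m), assumed to lie in (0,1). Then p_+/(1−p_+) = e^κ · p_−/(1−p_−) and p_+·(1+m)/2 + p_−·(1−m)/2 = c; consequently (p_+, p_−) coincides with the unique solution (q_+, q_−) of these two equations. Moreover, −(∂/∂m) Ξ(m,θ;c) = (1/2) log((1−p_+)/(1−p_−)). -/

import Mathlib

open scoped BigOperators
open Filter

noncomputable section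

/-- Entropy function of the Bernoulli distribution (finite branch). -/
def entS (p : ℝ) : ℝ := p * Real.log p + (1 - p) * Real.log (1 - p)

/-- Mole fraction `p_+ = 2θc/(1+m)`. -/
def pPlus (m θ c : ℝ) : ℝ := 2 * θ * c / (1 + m)

/-- Mole fraction `p_- = 2(1-θ)c/(1-m)`. -/
def pMinus (m θ c : ℝ) : ℝ := 2 * (1 - θ) * c / (1 - m)

/-- `Ξ(m,θ;c)` (finite branch). -/
def Xi (m θ c : ℝ) : ℝ :=
  -((1 + m) / 2) * entS (pPlus m θ c) - ((1 - m) / 2) * entS (pMinus m θ c)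

/-- Entropy function with the convention `S(p) = +∞` for `p ∉ [0,1]`. -/
def entSE (p : ℝ) : EReal := if 0 ≤ p ∧ p ≤ 1 then ((entS p : ℝ) : EReal) else ⊤

/-- `-Ξ(m,θ;c)` as an extended real (`+∞` where some mole fraction leaves `[0,1]`). -/
def negXiE (m θ c : ℝ) : EReal :=
  (((1 + m) / 2 : ℝ) : EReal) * entSE (pPlus m θ c)
    + (((1 - m) / 2 : ℝ) : EReal) * entSE (pMinus m θ c)

/-!
Both partial derivatives of `Ξ` come from the derivative `S'(p) = log p - log (1 - p)` of the
entropy. In `θ` the mole fractions move linearly, so `∂Ξ/∂θ = -c (S'(p₊) - S'(p₋))`, and the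
critical-point equation says that the log-odds of `p₊` and `p₋` differ by `κ`. In `m`, each
summand of `Ξ` is a perspective `x S(k/x)` of `S`, whose `x`-derivative is
`S(p) - p S'(p) = log (1 - p)` at `p = k/x`. Uniqueness of `(q₊, q₋)` holds because
`p (1 - q) - e^κ q (1 - p)` increases in `p` and decreases in `q` on the unit square, while the
mass balance makes `q` decrease when `p` increases.
-/

def logOdds (p : ℝ) : ℝ := Real.log p - Real.log (1 - p)

lemma entS_eq_neg_binEntropy : entS = fun p => -Real.binEntropy p := by
  funext p
  simp only [entS, Real.binEntropy, Real.log_inv]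
  ring

lemma hasDerivAt_entS {p : ℝ} (h0 : p ≠ 0) (h1 : p ≠ 1) : HasDerivAt entS (logOdds p) p := by
  rw [entS_eq_neg_binEntropy]
  exact (Real.hasDerivAt_binEntropy h0 h1).neg.congr_deriv (by rw [logOdds]; ring)

lemma entS_sub_mul_logOdds (p : ℝ) : entS p - p * logOdds p = Real.log (1 - p) := by
  rw [entS, logOdds]
  ring

lemma hasDerivAt_mul_entS_div {k x : ℝ} (hx : x ≠ 0) (h0 : k / x ≠ 0) (h1 : k / x ≠ 1) :
    HasDerivAt (fun y => y * entS (k / y)) (Real.log (1 - k / x)) x := by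
  have hquot : HasDerivAt (fun y => k / y) (-(k / x) / x) x := by
    simpa [div_eq_mul_inv, mul_assoc, pow_two] using (hasDerivAt_inv hx).const_mul k
  have h := (hasDerivAt_id x).mul ((hasDerivAt_entS h0 h1).comp x hquot)
  refine h.congr_deriv ?_
  rw [← entS_sub_mul_logOdds]
  simp only [Function.comp_apply, id]
  field_simp
  ring

lemma odds_eq_exp_mul_of_logOdds_sub_eq {p q κ : ℝ} (hp : p ∈ Set.Ioo (0 : ℝ) 1)
    (hq : q ∈ Set.Ioo (0 : ℝ) 1) (h : logOdds p - logOdds q = κ) :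
    p * (1 - q) = Real.exp κ * (q * (1 - p)) := by
  obtain ⟨hp0, hp1⟩ := hp
  obtain ⟨hq0, hq1⟩ := hq
  have h1p : 0 < 1 - p := by linarith
  have h1q : 0 < 1 - q := by linarith
  rw [← h, logOdds, logOdds, Real.exp_sub, Real.exp_sub, Real.exp_sub, Real.exp_log hp0,
    Real.exp_log hq0, Real.exp_log h1p, Real.exp_log h1q]
  field_simp

lemma eq_of_odds_eq_of_add_eq {A a b p q p' q' : ℝ} (hA : 0 < A) (ha : 0 < a) (hb : 0 < b)
    (hq : q ∈ Set.Icc (0 : ℝ) 1) (hp' : p' ∈ Set.Icc (0 : ℝ) 1)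
    (h : p * (1 - q) = A * (q * (1 - p))) (h' : p' * (1 - q') = A * (q' * (1 - p')))
    (hsum : a * p + b * q = a * p' + b * q') : p = p' ∧ q = q' := by
  obtain ⟨hq0, hq1⟩ := hq
  obtain ⟨hp'0, hp'1⟩ := hp'
  have hα : 0 < (1 - q) + A * q := by
    rcases hq1.lt_or_eq with hq1 | rfl
    · nlinarith
    · linarith
  have hβ : 0 < A * (1 - p') + p' := by
    rcases hp'1.lt_or_eq with hp'1 | rfl
    · nlinarith
    · linarith
  -- `p (1 - q) - A q (1 - p)` is bilinear, so its difference splits along the two coordinates.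
  have hsplit : (p - p') * ((1 - q) + A * q) + (q' - q) * (A * (1 - p') + p') = 0 := by
    linear_combination h - h'
  have hpp' : (p - p') * (b * ((1 - q) + A * q) + a * (A * (1 - p') + p')) = 0 := by
    linear_combination b * hsplit + (A * (1 - p') + p') * hsum
  have hp : p = p' := by
    have := (mul_eq_zero.1 hpp').resolve_right (by positivity)
    linarith
  refine ⟨hp, ?_⟩
  subst hp
  have : b * (q - q') = 0 := by linarith
  linarith [(mul_eq_zero.1 this).resolve_left hb.ne']

section Xi

variable {m θ c : ℝ}

lemma pPlus_mul_add_pMinus_mul (hm₁ : 1 + m ≠ 0) (hm₂ : 1 - m ≠ 0) :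
    pPlus m θ c * (1 + m) / 2 + pMinus m θ c * (1 - m) / 2 = c := by
  rw [pPlus, pMinus]
  field_simp
  ring

lemma hasDerivAt_Xi_theta (hm₁ : 1 + m ≠ 0) (hm₂ : 1 - m ≠ 0)
    (hp : pPlus m θ c ∈ Set.Ioo (0 : ℝ) 1) (hq : pMinus m θ c ∈ Set.Ioo (0 : ℝ) 1) :
    HasDerivAt (fun t => Xi m t c)
      (-(c * (logOdds (pPlus m θ c) - logOdds (pMinus m θ c)))) θ := by
  have hP : HasDerivAt (fun t => pPlus m t c) (2 * c / (1 + m)) θ := by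
    simpa [pPlus, mul_div_assoc, mul_comm, mul_left_comm] using
      (hasDerivAt_id θ).const_mul (2 * c / (1 + m))
  have hQ : HasDerivAt (fun t => pMinus m t c) (-(2 * c / (1 - m))) θ := by
    have h := ((hasDerivAt_id θ).const_sub 1).const_mul (2 * c / (1 - m))
    refine (h.congr_deriv (by ring)).congr_of_eventuallyEq (Eventually.of_forall fun t => ?_)
    simp only [pMinus, id]
    ring
  have h := (((hasDerivAt_entS hp.1.ne' hp.2.ne).comp θ hP).const_mul (-((1 + m) / 2))).sub
    (((hasDerivAt_entS hq.1.ne' hq.2.ne).comp θ hQ).const_mul ((1 - m) / 2))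
  refine h.congr_deriv ?_
  field_simp
  ring

lemma hasDerivAt_Xi_m (hm₁ : 1 + m ≠ 0) (hm₂ : 1 - m ≠ 0)
    (hp : pPlus m θ c ∈ Set.Ioo (0 : ℝ) 1) (hq : pMinus m θ c ∈ Set.Ioo (0 : ℝ) 1) :
    HasDerivAt (fun m' => Xi m' θ c)
      (-((Real.log (1 - pPlus m θ c) - Real.log (1 - pMinus m θ c)) / 2)) m := by
  have hpersp : ∀ m', pPlus m' θ c = θ * c / ((1 + m') / 2) ∧
      pMinus m' θ c = (1 - θ) * c / ((1 - m') / 2) := fun m' => by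
    simp only [pPlus, pMinus, div_div_eq_mul_div]
    constructor <;> ring
  have hXi : (fun m' => Xi m' θ c) = fun m' =>
      -((1 + m') / 2 * entS (θ * c / ((1 + m') / 2)))
        - (1 - m') / 2 * entS ((1 - θ) * c / ((1 - m') / 2)) := by
    funext m'
    rw [Xi, (hpersp m').1, (hpersp m').2]
    ring
  rw [(hpersp m).1] at hp
  rw [(hpersp m).2] at hq
  have hx₁ : HasDerivAt (fun m' : ℝ => (1 + m') / 2) (1 / 2) m :=
    ((hasDerivAt_id m).const_add 1).div_const 2
  have hx₂ : HasDerivAt (fun m' : ℝ => (1 - m') / 2) (-1 / 2) m := by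
    simpa [neg_div] using ((hasDerivAt_id m).const_sub 1).div_const 2
  have h := ((hasDerivAt_mul_entS_div (by simpa using hm₁) hp.1.ne' hp.2.ne).comp m hx₁).neg.sub
    ((hasDerivAt_mul_entS_div (by simpa using hm₂) hq.1.ne' hq.2.ne).comp m hx₂)
  rw [hXi, (hpersp m).1, (hpersp m).2]
  refine h.congr_deriv ?_
  ring

end Xi

theorem statement13_general (κ m c θ : ℝ) (hm : m ∈ Set.Ioo (-1 : ℝ) 1)
    (hc : c ∈ Set.Ioo (0 : ℝ) 1)
    (hcrit : deriv (fun t => Xi m t c) θ = -(κ * c))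
    (hp1 : pPlus m θ c ∈ Set.Ioo (0 : ℝ) 1) (hp2 : pMinus m θ c ∈ Set.Ioo (0 : ℝ) 1) :
    pPlus m θ c * (1 - pMinus m θ c) =
        Real.exp κ * (pMinus m θ c * (1 - pPlus m θ c)) ∧
      pPlus m θ c * (1 + m) / 2 + pMinus m θ c * (1 - m) / 2 = c ∧
      (∀ qp qm : ℝ, qp ∈ Set.Icc (0 : ℝ) 1 → qm ∈ Set.Icc (0 : ℝ) 1 →
          qp * (1 - qm) = Real.exp κ * (qm * (1 - qp)) →
          qp * (1 + m) / 2 + qm * (1 - m) / 2 = c →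
          qp = pPlus m θ c ∧ qm = pMinus m θ c) ∧
      -deriv (fun m' => Xi m' θ c) m =
        (1 / 2) * Real.log ((1 - pPlus m θ c) / (1 - pMinus m θ c)) := by
  have hm₁ : 0 < 1 + m := by linarith [hm.1]
  have hm₂ : 0 < 1 - m := by linarith [hm.2]
  have hlogOdds : logOdds (pPlus m θ c) - logOdds (pMinus m θ c) = κ := by
    have h := (hasDerivAt_Xi_theta hm₁.ne' hm₂.ne' hp1 hp2).deriv.symm.trans hcrit
    exact mul_left_cancel₀ hc.1.ne' ((neg_injective h).trans (mul_comm κ c))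
  have hodds := odds_eq_exp_mul_of_logOdds_sub_eq hp1 hp2 hlogOdds
  have hmass := pPlus_mul_add_pMinus_mul (θ := θ) (c := c) hm₁.ne' hm₂.ne'
  refine ⟨hodds, hmass, fun qp qm hqp hqm hqodds hqmass => ?_, ?_⟩
  · exact eq_of_odds_eq_of_add_eq (Real.exp_pos κ) hm₁ hm₂ hqm (Set.Ioo_subset_Icc_self hp1)
      hqodds hodds (by linarith)
  · rw [(hasDerivAt_Xi_m hm₁.ne' hm₂.ne' hp1 hp2).deriv,
      Real.log_div (by linarith [hp1.2]) (by linarith [hp2.2])]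
    ring

/-- (Lemma 3.7 of the paper.) If `θ` solves `(∂/∂θ)Ξ(m,θ;c) = −κc` and
`p_± = 2θc/(1±m)` lie in `(0,1)`, then `(p_+,p_−)` satisfies the defining equations of
`(q_+,q_−)` (and hence coincides with the unique solution), and
`−(∂/∂m)Ξ(m,θ;c) = ½ log((1−p_+)/(1−p_−))`. -/
theorem statement13 (κ m c θ : ℝ) (hκ : 0 < κ) (hm : m ∈ Set.Ioo (-1 : ℝ) 1)
    (hc : c ∈ Set.Ioo (0 : ℝ) 1) (hθ : θ ∈ Set.Ioo (0 : ℝ) 1)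
    (hcrit : deriv (fun t => Xi m t c) θ = -(κ * c))
    (hp1 : pPlus m θ c ∈ Set.Ioo (0 : ℝ) 1) (hp2 : pMinus m θ c ∈ Set.Ioo (0 : ℝ) 1) :
    pPlus m θ c * (1 - pMinus m θ c) =
        Real.exp κ * (pMinus m θ c * (1 - pPlus m θ c)) ∧
      pPlus m θ c * (1 + m) / 2 + pMinus m θ c * (1 - m) / 2 = c ∧
      (∀ qp qm : ℝ, qp ∈ Set.Icc (0 : ℝ) 1 → qm ∈ Set.Icc (0 : ℝ) 1 →
          qp * (1 - qm) = Real.exp κ * (qm * (1 - qp)) →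
          qp * (1 + m) / 2 + qm * (1 - m) / 2 = c →
          qp = pPlus m θ c ∧ qm = pMinus m θ c) ∧
      -deriv (fun m' => Xi m' θ c) m =
        (1 / 2) * Real.log ((1 - pPlus m θ c) / (1 - pMinus m θ c)) :=
  statement13_general κ m c θ hm hc hcrit hp1 hp2
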